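/- Let R be a commutative ring, s ∈ R, and C an R-module such that the natural map C → lim_n C/sⁿC is an isomorphism (C is s-adically separated and complete). Then C is an s-contramodule: Hom_R(R[s⁻¹], C) = 0 = Ext¹_R(R[s⁻¹], C). -/

import Mathlib

/-
Over `R[X]`, multiplication by `s X - 1` gives a free resolution
`0 → R[X] → R[X] → R[s⁻¹] → 0`, so `Ext¹(R[s⁻¹], C)` vanishes as soon as every linear map
`R[X] → C` extends along it. On monomials this asks for `c n - s • c (n + 1) = b n` for
arbitrary `b`, which the `s`-adically convergent series `c n = ∑ₖ sᵏ • b (n + k)` solves.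
The vanishing of `Hom(R[s⁻¹], C)` is simpler: a map out of an `s`-divisible module lands in
`⋂ₙ sⁿ C = 0`.
-/

open CategoryTheory Opposite Polynomial
open scoped nonZeroDivisors

namespace CategoryTheory.ShortComplex

open Limits ZeroObject

variable {C : Type*} [Category C] [Abelian C] (S : ShortComplex C)

noncomputable def twoTermComplex : ChainComplex C ℕ where
  X
    | 0 => S.X₂
    | 1 => S.X₁
    | _ + 2 => 0
  d
    | 1, 0 => S.f
    | _, _ => 0
  shape i j hij := by
    obtain _ | _ | i := i <;> obtain _ | _ | j := j <;> first | rfl | exact absurd rfl hij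
  d_comp_d' i j k hij hjk := by
    simp only [ComplexShape.down_Rel] at hij hjk
    subst hij hjk
    exact zero_comp

variable {S}

noncomputable def ShortExact.projectiveResolution (hS : S.ShortExact) [Projective S.X₁]
    [Projective S.X₂] : ProjectiveResolution S.X₃ where
  complex := S.twoTermComplex
  projective
    | 0 | 1 => by dsimp [twoTermComplex]; infer_instance
    | _ + 2 => (isZero_zero C).projective
  π := (ChainComplex.toSingle₀Equiv _ _).symm ⟨S.g, S.zero⟩
  quasiIso := ⟨fun n => by
    cases n with
    | zero =>
      rw [ChainComplex.quasiIsoAt₀_iff, ShortComplex.quasiIso_iff_of_zeros' _ rfl rfl rfl]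
      have hπ := ChainComplex.toSingle₀Equiv_symm_apply_f_zero (C := S.twoTermComplex) S.g S.zero
      dsimp only [HomologicalComplex.shortComplexFunctor', HomologicalComplex.sc']
      simp only [hπ]
      exact ⟨hS.exact, hS.epi_g⟩
    | succ n =>
      rw [quasiIsoAt_iff_exactAt' _ _ (ChainComplex.exactAt_succ_single_obj _ _),
        HomologicalComplex.exactAt_iff' _ (n + 2) (n + 1) n (by simp) (by simp)]
      obtain _ | n := n
      · exact (ShortComplex.exact_iff_mono _ rfl).2 hS.mono_f
      · exact ShortComplex.exact_of_isZero_X₂ _ (isZero_zero C)⟩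

theorem ShortExact.isZero_ext_one (R : Type*) [Ring R] [Linear R C] [EnoughProjectives C]
    (hS : S.ShortExact) [Projective S.X₁] [Projective S.X₂] {Y : C}
    (hY : ∀ g : S.X₁ ⟶ Y, ∃ h : S.X₂ ⟶ Y, S.f ≫ h = g) :
    IsZero (((Ext R C 1).obj (Opposite.op S.X₃)).obj Y) := by
  refine IsZero.of_iso ?_ (hS.projectiveResolution.isoExt 1 Y)
  rw [← HomologicalComplex.exactAt_iff_isZero_homology,
    HomologicalComplex.exactAt_iff' _ 0 1 2 (by simp) (by simp), ShortComplex.moduleCat_exact_iff]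
  intro (g : S.X₁ ⟶ Y) _
  exact hY g

end CategoryTheory.ShortComplex

section Presentation

variable {R : Type*} [CommRing R] (s : R)

noncomputable def Localization.awayPresentation : ShortComplex (ModuleCat R) where
  X₁ := ModuleCat.of R R[X]
  X₂ := ModuleCat.of R R[X]
  X₃ := ModuleCat.of R (Localization.Away s)
  f := ModuleCat.ofHom (LinearMap.mulLeft R (C s * X - 1))
  g := ModuleCat.ofHom ((Localization.awayEquivAdjoin s).symm.toLinearMap ∘ₗ
    (AdjoinRoot.mkₐ (C s * X - 1)).toLinearMap)
  zero := by
    ext p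
    simp [AdjoinRoot.mk_self]

theorem Localization.awayPresentation_shortExact : (awayPresentation s).ShortExact := by
  refine .mk' ?_ ?_ ?_
  · rw [ShortComplex.moduleCat_exact_iff_ker_sub_range]
    intro (p : R[X]) hp
    have hp' : (awayEquivAdjoin s).symm (AdjoinRoot.mk (C s * X - 1) p) = 0 := hp
    rw [map_eq_zero_iff _ (awayEquivAdjoin s).symm.injective, AdjoinRoot.mk_eq_zero] at hp'
    obtain ⟨q, rfl⟩ := hp'
    exact ⟨q, rfl⟩
  · rw [ModuleCat.mono_iff_injective]
    have : C s * X - 1 ∈ R[X]⁰ :=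
      mem_nonzeroDivisors_of_coeff_mem 0 (by simpa using isUnit_one.neg.mem_nonZeroDivisors)
    exact fun p q h ↦ (mul_cancel_left_mem_nonZeroDivisors this).mp h
  · rw [ModuleCat.epi_iff_surjective]
    exact (Localization.awayEquivAdjoin s).symm.surjective.comp AdjoinRoot.mk_surjective

instance : Projective (Localization.awayPresentation s).X₁ :=
  ModuleCat.projective_of_free (basisMonomials R)

instance : Projective (Localization.awayPresentation s).X₂ :=
  ModuleCat.projective_of_free (basisMonomials R)

theorem IsLocalization.Away.surjective_smul {S : Type*} [CommRing S] [Algebra R S]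
    [IsLocalization.Away s S] : Function.Surjective fun y : S ↦ s • y := fun y ↦
  ⟨invSelf s * y, by dsimp only; rw [Algebra.smul_def, ← mul_assoc, mul_invSelf, one_mul]⟩

end Presentation

section AdicComplete

variable {R : Type*} [CommRing R] {I : Ideal R} {M : Type*} [AddCommGroup M] [Module R M] {s : R}

lemma pow_smul_mem_pow_smul_top (hs : s ∈ I) (n : ℕ) (x : M) :
    s ^ n • x ∈ (I ^ n • ⊤ : Submodule R M) :=
  Submodule.smul_mem_smul (Ideal.pow_mem_pow hs n) trivial

theorem LinearMap.eq_zero_of_isHausdorff {N : Type*} [AddCommGroup N] [Module R N]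
    [IsHausdorff I M] (hs : s ∈ I) (hN : Function.Surjective fun y : N ↦ s • y)
    (φ : N →ₗ[R] M) : φ = 0 := by
  ext y
  refine IsHausdorff.haus ‹_› _ fun n ↦ ?_
  obtain ⟨z, rfl⟩ : ∃ z, s ^ n • z = y := by simpa [smul_iterate] using hN.iterate n y
  rw [map_smul, SModEq.zero]
  exact pow_smul_mem_pow_smul_top hs n (φ z)

theorem exists_sub_smul_succ_eq [IsAdicComplete I M] (hs : s ∈ I) (b : ℕ → M) :
    ∃ c : ℕ → M, ∀ n, c n - s • c (n + 1) = b n := by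
  let p : ℕ → ℕ → M := fun n m ↦ ∑ k ∈ Finset.range m, s ^ k • b (n + k)
  have hp_succ (n m : ℕ) : p n (m + 1) = b n + s • p (n + 1) m := by
    simp only [p, Finset.sum_range_succ', Finset.smul_sum, smul_smul, ← pow_succ']
    rw [add_comm]
    simp only [pow_zero, one_smul, add_zero, add_assoc, Nat.add_comm 1]
  have hp_cauchy (n : ℕ) {m m' : ℕ} (hm : m ≤ m') :
      p n m ≡ p n m' [SMOD (I ^ m • ⊤ : Submodule R M)] := by
    rw [SModEq.sub_mem]
    simp only [p]
    rw [← Finset.sum_range_add_sum_Ico _ hm, sub_add_cancel_left]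
    refine Submodule.neg_mem _ (Submodule.sum_mem _ fun k hk ↦ ?_)
    exact Submodule.pow_smul_top_le I M (Finset.mem_Ico.mp hk).1 (pow_smul_mem_pow_smul_top hs k _)
  choose c hc using fun n ↦ IsPrecomplete.prec inferInstance (hp_cauchy n)
  refine ⟨c, fun n ↦ (IsHausdorff.eq_iff_smodEq (I := I)).mpr fun m ↦ ?_⟩
  have hcn : c n ≡ p n (m + 1) [SMOD (I ^ m • ⊤ : Submodule R M)] :=
    ((hc n (m + 1)).mono (Submodule.pow_smul_top_le I M m.le_succ)).symm
  have hcn' : s • c (n + 1) ≡ s • p (n + 1) m [SMOD (I ^ m • ⊤ : Submodule R M)] :=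
    (hc (n + 1) m).symm.smul s
  simpa [hp_succ] using hcn.sub hcn'

theorem exists_comp_mulLeft_eq [IsAdicComplete I M] (hs : s ∈ I)
    (g : R[X] →ₗ[R] M) : ∃ h : R[X] →ₗ[R] M, h ∘ₗ LinearMap.mulLeft R (C s * X - 1) = g := by
  obtain ⟨c, hc⟩ := exists_sub_smul_succ_eq hs fun n ↦ -g (monomial n 1)
  refine ⟨(basisMonomials R).constr R c, (basisMonomials R).ext fun n ↦ ?_⟩
  have hX : (C s * X - 1) * monomial n (1 : R) = s • monomial (n + 1) 1 - monomial n 1 := by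
    rw [sub_mul, one_mul, C_mul_X_eq_monomial, monomial_mul_monomial, add_comm 1 n, mul_one,
      smul_monomial, smul_eq_mul, mul_one]
  simp only [LinearMap.comp_apply, LinearMap.mulLeft_apply, coe_basisMonomials, hX, map_sub,
    map_smul]
  have hconstr (k : ℕ) : (basisMonomials R).constr R c (monomial k 1) = c k := by
    simpa using (basisMonomials R).constr_basis R c k
  rw [hconstr, hconstr, ← neg_sub, hc n, neg_neg]

end AdicComplete

/-- Over a commutative ring `R`, if the natural map `C → lim_n C/sⁿC`
is an isomorphism (`C` is `s`-adically separated and complete), then `C` is an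
`s`-contramodule: `Hom_R(R[s⁻¹],C) = 0 = Ext¹_R(R[s⁻¹],C)`. -/
theorem sSeparated_sComplete_implies_sContramodule
    (R : Type) [CommRing R] (s : R) (C : Type) [AddCommGroup C] [Module R C]
    (h : Function.Bijective (AdicCompletion.of (Ideal.span {s}) C)) :
    Subsingleton (Localization.Away s →ₗ[R] C) ∧
      Subsingleton (((Ext R (ModuleCat R) 1).obj
        (op (ModuleCat.of R (Localization.Away s)))).obj (ModuleCat.of R C)) := by
  have hC : IsAdicComplete (Ideal.span {s}) C := AdicCompletion.of_bijective_iff.mp h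
  have hs : s ∈ Ideal.span {s} := Ideal.mem_span_singleton_self s
  have hdiv := IsLocalization.Away.surjective_smul s (S := Localization.Away s)
  refine ⟨⟨fun φ ψ ↦ ?_⟩, ?_⟩
  · rw [φ.eq_zero_of_isHausdorff hs hdiv, ψ.eq_zero_of_isHausdorff hs hdiv]
  · rw [← ModuleCat.isZero_iff_subsingleton]
    refine (Localization.awayPresentation_shortExact s).isZero_ext_one R fun g ↦ ?_
    obtain ⟨g', hg'⟩ := exists_comp_mulLeft_eq hs g.hom
    exact ⟨ModuleCat.ofHom g', ModuleCat.hom_ext hg'⟩
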